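/- arXiv:2112.06325 — 3 statements merged into one kernel-verified Lean document; each statement's English description precedes it below -/
import Mathlib

section
/- Delsarte's theorem: for a linear code C ⊆ F_{q^t}^n, the dual over F_q of its subfield subcode equals the trace code of its dual: (C ∩ F_q^n)^⊥ = tr(C^⊥), where duality on the left is taken inside F_q^n. -/
/-!
For `v : ι → K` and `w : ι → F`, F-linearity of the trace gives `(tr ∘ v) ⬝ᵥ w = tr (v ⬝ᵥ w)`.
Since a `K`-subspace `D` is stable under scaling by `K` and the trace form of a separable
extension is nondegenerate, `w` is orthogonal to `tr(D)` exactly when `w` is orthogonal to `D`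
inside `K^ι`. For `D = C^⊥` this reads `tr(C^⊥)^⊥ = C ∩ F^ι`, and dualizing once more
gives Delsarte's theorem.
-/

open Matrix

section DotProduct

variable {ι : Type*} [Fintype ι]

lemma Matrix.dotProductBilin_isSymm {F : Type*} [CommSemiring F] :
    LinearMap.BilinForm.IsSymm (dotProductBilin F F : LinearMap.BilinForm F (ι → F)) :=
  ⟨dotProduct_comm⟩

lemma Matrix.dotProductBilin_nondegenerate {F : Type*} [CommSemiring F] :
    LinearMap.BilinForm.Nondegenerate (dotProductBilin F F : LinearMap.BilinForm F (ι → F)) :=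
  ⟨fun x hx ↦ dotProduct_eq_zero x hx,
    fun y hy ↦ dotProduct_eq_zero y fun x ↦ (dotProduct_comm y x).trans (hy x)⟩

lemma Algebra.trace_comp_dotProduct {R S : Type*} [CommRing R] [CommRing S] [Algebra R S]
    (v : ι → S) (w : ι → R) :
    (trace R S ∘ v) ⬝ᵥ w = trace R S (v ⬝ᵥ (algebraMap R S ∘ w)) := by
  simp only [dotProduct, map_sum, Function.comp_apply]
  refine Finset.sum_congr rfl fun i _ ↦ ?_
  rw [mul_comm, ← smul_eq_mul, ← map_smul, smul_def, mul_comm]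

end DotProduct

namespace Submodule

variable {F K ι : Type*} [Field F] [Field K] [Algebra F K]

section DualCode

variable [Fintype ι]

abbrev dualCode (C : Submodule F (ι → F)) : Submodule F (ι → F) :=
  LinearMap.BilinForm.orthogonal (dotProductBilin F F) C

lemma mem_dualCode {C : Submodule F (ι → F)} {w : ι → F} :
    w ∈ C.dualCode ↔ ∀ c ∈ C, w ⬝ᵥ c = 0 := by
  simp [LinearMap.BilinForm.mem_orthogonal_iff, dotProduct_comm]

lemma dualCode_dualCode (C : Submodule F (ι → F)) : C.dualCode.dualCode = C :=
  LinearMap.BilinForm.orthogonal_orthogonal dotProductBilin_nondegenerate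
    dotProductBilin_isSymm.isRefl C

end DualCode

variable (F)

def subfieldSubcode (C : Submodule K (ι → K)) : Submodule F (ι → F) :=
  (C.restrictScalars F).comap (LinearMap.compLeft (Algebra.linearMap F K) ι)

noncomputable def traceCode (C : Submodule K (ι → K)) : Submodule F (ι → F) :=
  (C.restrictScalars F).map (LinearMap.compLeft (Algebra.trace F K) ι)

variable {F}

lemma mem_subfieldSubcode {C : Submodule K (ι → K)} {w : ι → F} :
    w ∈ C.subfieldSubcode F ↔ algebraMap F K ∘ w ∈ C :=
  Iff.rfl

lemma mem_traceCode {C : Submodule K (ι → K)} {w : ι → F} :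
    w ∈ C.traceCode F ↔ ∃ v ∈ C, Algebra.trace F K ∘ v = w :=
  Iff.rfl

variable [Fintype ι] [FiniteDimensional F K] [Algebra.IsSeparable F K]

lemma mem_dualCode_traceCode {D : Submodule K (ι → K)} {w : ι → F} :
    w ∈ (D.traceCode F).dualCode ↔ algebraMap F K ∘ w ∈ D.dualCode := by
  simp only [mem_dualCode, mem_traceCode, forall_exists_index, and_imp,
    forall_apply_eq_imp_iff₂]
  constructor
  · intro h v hv
    have h_trace : ∀ a : K, Algebra.trace F K (a * (v ⬝ᵥ (algebraMap F K ∘ w))) = 0 := by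
      intro a
      rw [← smul_eq_mul, ← smul_dotProduct, ← Algebra.trace_comp_dotProduct, dotProduct_comm]
      exact h _ (D.smul_mem a hv)
    rw [dotProduct_comm]
    exact (traceForm_nondegenerate F K).1 _ fun a ↦ by
      rw [Algebra.traceForm_apply, mul_comm]
      exact h_trace a
  · intro h v hv
    rw [dotProduct_comm, Algebra.trace_comp_dotProduct, dotProduct_comm, h v hv, map_zero]

lemma dualCode_traceCode_dualCode (C : Submodule K (ι → K)) :
    (C.dualCode.traceCode F).dualCode = C.subfieldSubcode F := by
  ext w
  rw [mem_dualCode_traceCode, dualCode_dualCode, mem_subfieldSubcode]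

theorem dualCode_subfieldSubcode (C : Submodule K (ι → K)) :
    (C.subfieldSubcode F).dualCode = C.dualCode.traceCode F := by
  rw [← dualCode_traceCode_dualCode, dualCode_dualCode]

end Submodule

theorem stmt_9_general {Fq K : Type*} [Field Fq] [Field K] [Fintype K]
    [Algebra Fq K] (n : ℕ) (C : Submodule K (Fin n → K)) :
    {w : Fin n → Fq | ∀ c : Fin n → Fq,
        (fun i => algebraMap Fq K (c i)) ∈ C → ∑ i, w i * c i = 0} =
    {w | ∃ v : Fin n → K, (∀ c ∈ C, ∑ i, v i * c i = 0) ∧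
        ∀ i, w i = Algebra.trace Fq K (v i)} := by
  ext w
  have := SetLike.ext_iff.mp (C.dualCode_subfieldSubcode (F := Fq)) w
  simp only [Submodule.mem_dualCode, Submodule.mem_subfieldSubcode, Submodule.mem_traceCode] at this
  exact this.trans (exists_congr fun v ↦ and_congr_right fun _ ↦
    funext_iff.trans (forall_congr' fun i ↦ eq_comm))

/-- Delsarte's theorem: for a linear code `C ⊆ F_{q^t}^n`, the dual over `F_q` of its
subfield subcode equals the trace code of its dual: `(C ∩ F_q^n)^⊥ = tr(C^⊥)`. -/
theorem stmt_9 {Fq K : Type*} [Field Fq] [Field K] [Fintype Fq] [Fintype K]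
    [Algebra Fq K] (n : ℕ) (C : Submodule K (Fin n → K)) :
    {w : Fin n → Fq | ∀ c : Fin n → Fq,
        (fun i => algebraMap Fq K (c i)) ∈ C → ∑ i, w i * c i = 0} =
    {w | ∃ v : Fin n → K, (∀ c ∈ C, ∑ i, v i * c i = 0) ∧
        ∀ i, w i = Algebra.trace Fq K (v i)} :=
  stmt_9_general n C
end

section
/- The dual of the tensor product of generalized Reed–Solomon codes is an augmented Cartesian code: T(S,k,g)^⊥ = ACar(S, k′, L/g), where k′ = (n₁−k₁,…,n_m−k_m) and L(x) = ∏ⱼ Lⱼ′(xⱼ) with Lⱼ(xⱼ) = ∏_{s∈Sⱼ}(xⱼ−s). -/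
open Polynomial Finset

section Helpers

variable {F : Type*} [Field F]

/-- `Dval α i = L'(α i)` where `L = ∏ (X - α i')`. -/
noncomputable def Dval {N : ℕ} (α : Fin N → F) (i : Fin N) : F :=
  (Polynomial.derivative (∏ i', (X - C (α i')))).eval (α i)

lemma Dval_eq {N : ℕ} (α : Fin N → F) (i : Fin N) :
    Dval α i = ∏ i' ∈ Finset.univ.erase i, (α i - α i') := by
  have h : (∏ i', (X - C (α i'))) = Lagrange.nodal Finset.univ α :=
    (Lagrange.nodal_eq _ _).symm
  rw [Dval, h, Lagrange.eval_nodal_derivative_eval_node_eq (Finset.mem_univ i),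
    Lagrange.eval_nodal]

lemma Dval_ne_zero {N : ℕ} {α : Fin N → F} (hα : Function.Injective α) (i : Fin N) :
    Dval α i ≠ 0 := by
  rw [Dval_eq]
  exact Finset.prod_ne_zero_iff.mpr fun j hj =>
    sub_ne_zero.mpr fun h => (Finset.mem_erase.mp hj).1 (hα h).symm

lemma coeff_basis_eq {N : ℕ} {α : Fin N → F} (hα : Function.Injective α) (i : Fin N) :
    (Lagrange.basis Finset.univ α i).coeff (N - 1) = (Dval α i)⁻¹ := by
  have hvs : Set.InjOn α ↑(Finset.univ : Finset (Fin N)) := Function.Injective.injOn hα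
  have hdeg : (Lagrange.basis Finset.univ α i).natDegree = N - 1 := by
    rw [Lagrange.natDegree_basis hvs (Finset.mem_univ i), Finset.card_univ, Fintype.card_fin]
  rw [← hdeg, Polynomial.coeff_natDegree, Lagrange.basis, Polynomial.leadingCoeff_prod,
    Dval_eq, ← Finset.prod_inv_distrib]
  refine Finset.prod_congr rfl fun j hj => ?_
  rw [Lagrange.basisDivisor, Polynomial.leadingCoeff_mul, Polynomial.leadingCoeff_C,
    leadingCoeff_X_sub_C, mul_one]

lemma sigma_val {N : ℕ} {α : Fin N → F} (hα : Function.Injective α) {t : ℕ} (ht : t < N) :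
    ∑ i, α i ^ t * (Dval α i)⁻¹ = if t = N - 1 then 1 else 0 := by
  have hvs : Set.InjOn α ↑(Finset.univ : Finset (Fin N)) := Function.Injective.injOn hα
  have hdeg : ((X : F[X]) ^ t).degree < (Finset.univ : Finset (Fin N)).card := by
    rw [Polynomial.degree_X_pow, Finset.card_univ, Fintype.card_fin]
    exact_mod_cast ht
  have h := Lagrange.eq_interpolate (f := (X : F[X]) ^ t) hvs hdeg
  calc ∑ i, α i ^ t * (Dval α i)⁻¹
      = (Lagrange.interpolate Finset.univ α fun i => eval (α i) ((X : F[X]) ^ t)).coeff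
          (N - 1) := by
        rw [Lagrange.interpolate_apply, Polynomial.finset_sum_coeff]
        refine (Finset.sum_congr rfl fun i _ => ?_).symm
        rw [Polynomial.coeff_C_mul, coeff_basis_eq hα i, eval_pow, eval_X]
    _ = ((X : F[X]) ^ t).coeff (N - 1) := by rw [← h]
    _ = if t = N - 1 then 1 else 0 := by rw [Polynomial.coeff_X_pow]; simp [eq_comm]

variable {m : ℕ} {n : Fin m → ℕ}

/-- evaluation of the monomial `x^a` at the point indexed by `p`. -/
noncomputable def monoEv (s : ∀ j, Fin (n j) → F) (a : Fin m → ℕ) (p : ∀ j, Fin (n j)) : F :=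
  ∏ j, (s j (p j)) ^ (a j)

lemma pairing (s : ∀ j, Fin (n j) → F) (a b : Fin m → ℕ) :
    ∑ p : ∀ j, Fin (n j), monoEv s a p * monoEv s b p * (∏ j, Dval (s j) (p j))⁻¹
      = ∏ j, ∑ i, (s j i) ^ (a j + b j) * (Dval (s j) i)⁻¹ := by
  classical
  have hps := Finset.prod_univ_sum (fun j => (Finset.univ : Finset (Fin (n j))))
    (fun j y => (s j y) ^ (a j + b j) * (Dval (s j) y)⁻¹)
  rw [Fintype.piFinset_univ] at hps
  rw [hps]
  refine Finset.sum_congr rfl fun p _ => ?_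
  rw [monoEv, monoEv, ← Finset.prod_inv_distrib, ← Finset.prod_mul_distrib,
    ← Finset.prod_mul_distrib]
  exact Finset.prod_congr rfl fun j _ => by rw [pow_add]

lemma interp_exists (s : ∀ j, Fin (n j) → F) (hn : ∀ j, 0 < n j)
    (hs : ∀ j, Function.Injective (s j)) (v : (∀ j, Fin (n j)) → F) :
    ∃ H : (∀ j, Fin (n j)) → F,
      ∀ p, ∑ b : ∀ j, Fin (n j), H b * monoEv s (fun j => (b j : ℕ)) p = v p := by
  classical
  refine ⟨fun b => ∑ q, v q * ∏ j, (Lagrange.basis Finset.univ (s j) (q j)).coeff (b j),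
    fun p => ?_⟩
  have keyev : ∀ (j : Fin m) (i x : Fin (n j)),
      (∑ b : Fin (n j),
        (Lagrange.basis Finset.univ (s j) i).coeff (b : ℕ) * (s j x) ^ (b : ℕ))
        = if i = x then 1 else 0 := by
    intro j i x
    have hdeg : (Lagrange.basis Finset.univ (s j) i).natDegree < n j := by
      rw [Lagrange.natDegree_basis (hs j).injOn (Finset.mem_univ i), Finset.card_univ,
        Fintype.card_fin]
      exact Nat.sub_lt (hn j) one_pos
    rw [Fin.sum_univ_eq_sum_range
      (fun b => (Lagrange.basis Finset.univ (s j) i).coeff b * (s j x) ^ b) (n j),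
      ← Polynomial.eval_eq_sum_range' hdeg]
    by_cases h : i = x
    · subst h; rw [Lagrange.eval_basis_self (hs j).injOn (Finset.mem_univ i), if_pos rfl]
    · rw [Lagrange.eval_basis_of_ne h (Finset.mem_univ x), if_neg h]
  have step1 : ∀ b : ∀ j, Fin (n j),
      (∑ q, v q * ∏ j, (Lagrange.basis Finset.univ (s j) (q j)).coeff (b j))
        * monoEv s (fun j => (b j : ℕ)) p
      = ∑ q, v q * ∏ j, ((Lagrange.basis Finset.univ (s j) (q j)).coeff (b j)
          * (s j (p j)) ^ ((b j : ℕ))) := by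
    intro b
    rw [Finset.sum_mul]
    refine Finset.sum_congr rfl fun q _ => ?_
    rw [mul_assoc, monoEv, ← Finset.prod_mul_distrib]
  rw [Finset.sum_congr rfl fun b _ => step1 b, Finset.sum_comm]
  have step2 : ∀ q, (∑ b : ∀ j, Fin (n j),
      v q * ∏ j, ((Lagrange.basis Finset.univ (s j) (q j)).coeff (b j)
        * (s j (p j)) ^ ((b j : ℕ))))
      = v q * if q = p then 1 else 0 := by
    intro q
    rw [← Finset.mul_sum]
    congr 1
    have hps := Finset.prod_univ_sum (fun j => (Finset.univ : Finset (Fin (n j))))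
      (fun j (y : Fin (n j)) =>
        (Lagrange.basis Finset.univ (s j) (q j)).coeff (y : ℕ) * (s j (p j)) ^ (y : ℕ))
    rw [Fintype.piFinset_univ] at hps
    rw [← hps]
    rw [Finset.prod_congr rfl fun j _ => keyev j (q j) (p j)]
    by_cases h : q = p
    · subst h; simp
    · rw [if_neg h]
      obtain ⟨j, hj⟩ := Function.ne_iff.mp h
      exact Finset.prod_eq_zero (Finset.mem_univ j) (if_neg hj)
  rw [Finset.sum_congr rfl fun q _ => step2 q]
  simp [Finset.sum_ite_eq', mul_ite]

end Helpers



/-- The tensor product of generalized Reed–Solomon codes `T(S,k,g)`. -/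
def TensorGRS (F : Type*) [Field F] {m : ℕ} (n k : Fin m → ℕ)
    (s : ∀ j, Fin (n j) → F) (g : Fin m → Polynomial F) :
    Set ((∀ j, Fin (n j)) → F) :=
  {c | ∃ f : MvPolynomial (Fin m) F,
      (∀ a ∈ f.support, ∀ j, a j < k j) ∧
      ∀ p, c p = (MvPolynomial.eval (fun j => (s j) (p j)) f) /
        ∏ j, (g j).eval ((s j) (p j))}

/-- Augmented Cartesian code with weight function `w`. -/
def ACarSet (F : Type*) [Field F] {m : ℕ} (n k : Fin m → ℕ)
    (s : ∀ j, Fin (n j) → F) (w : (∀ j, Fin (n j)) → F) :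
    Set ((∀ j, Fin (n j)) → F) :=
  {c | ∃ f : MvPolynomial (Fin m) F,
      (∀ a ∈ f.support, (∀ j, a j < n j) ∧ ¬ ∀ j, k j ≤ a j) ∧
      ∀ p, c p = MvPolynomial.eval (fun j => s j (p j)) f / w p}

/-- The dual of the tensor product of GRS codes is an augmented Cartesian code:
`T(S,k,g)^⊥ = ACar(S, k′, L/g)` with `k′ⱼ = nⱼ − kⱼ` and `L = ∏ⱼ Lⱼ′(xⱼ)`. -/
theorem stmt_11 {F : Type*} [Field F] [Fintype F] (m : ℕ)
    (n k : Fin m → ℕ) (hn : ∀ j, 0 < n j) (hk : ∀ j, k j ≤ n j)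
    (s : ∀ j, Fin (n j) → F) (hs : ∀ j, Function.Injective (s j))
    (g : Fin m → Polynomial F) (hg : ∀ j i, (g j).eval (s j i) ≠ 0) :
    {w : (∀ j, Fin (n j)) → F |
        ∀ c ∈ TensorGRS F n k s g, ∑ p, w p * c p = 0} =
      ACarSet F n (fun j => n j - k j) s
        (fun p =>
          (∏ j, (Polynomial.derivative
              (∏ i, (Polynomial.X - Polynomial.C (s j i)))).eval (s j (p j))) /
          ∏ j, (g j).eval (s j (p j))) := by
  classical
  have hGp : ∀ p : ∀ j, Fin (n j), (∏ j, (g j).eval (s j (p j))) ≠ 0 :=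
    fun p => Finset.prod_ne_zero_iff.mpr fun j _ => hg j (p j)
  have hLp : ∀ p : ∀ j, Fin (n j), (∏ j, Dval (s j) (p j)) ≠ 0 :=
    fun p => Finset.prod_ne_zero_iff.mpr fun j _ => Dval_ne_zero (hs j) (p j)
  have hLpeq : ∀ p : ∀ j, Fin (n j),
      (∏ j, (Polynomial.derivative (∏ i, (Polynomial.X - Polynomial.C (s j i)))).eval
         (s j (p j))) = ∏ j, Dval (s j) (p j) := fun p => rfl
  ext w
  simp only [Set.mem_setOf_eq, TensorGRS, ACarSet]
  constructor
  · -- dual ⊆ ACar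
    intro hw
    have hmono : ∀ a : Fin m → ℕ, (∀ j, a j < k j) →
        ∑ p, w p * (monoEv s a p / ∏ j, (g j).eval (s j (p j))) = 0 := by
      intro a ha
      refine hw _ ⟨MvPolynomial.monomial (Finsupp.equivFunOnFinite.symm a) 1, ?_, ?_⟩
      · intro d hd j
        rw [MvPolynomial.support_monomial, if_neg one_ne_zero, Finset.mem_singleton] at hd
        subst hd
        simpa using ha j
      · intro p
        rw [MvPolynomial.eval_monomial, one_mul, Finsupp.prod_pow]
        simp [monoEv]
    obtain ⟨H, hH⟩ := interp_exists s hn hs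
      (fun p => w p * (∏ j, Dval (s j) (p j)) / ∏ j, (g j).eval (s j (p j)))
    have hpair : ∀ a : Fin m → ℕ, (∀ j, a j < k j) →
        ∑ b : ∀ j, Fin (n j),
          H b * ∏ j, ∑ i, (s j i) ^ (a j + (b j : ℕ)) * (Dval (s j) i)⁻¹ = 0 := by
      intro a ha
      have h1 : ∀ b : ∀ j, Fin (n j),
          H b * ∏ j, ∑ i, (s j i) ^ (a j + (b j : ℕ)) * (Dval (s j) i)⁻¹
          = ∑ p, H b * (monoEv s a p * monoEv s (fun j => (b j : ℕ)) p
              * (∏ j, Dval (s j) (p j))⁻¹) := by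
        intro b
        rw [← Finset.mul_sum, pairing s a (fun j => (b j : ℕ))]
      rw [Finset.sum_congr rfl fun b _ => h1 b, Finset.sum_comm]
      have h2 : ∀ p, (∑ b : ∀ j, Fin (n j), H b * (monoEv s a p
          * monoEv s (fun j => (b j : ℕ)) p * (∏ j, Dval (s j) (p j))⁻¹))
          = w p * (monoEv s a p / ∏ j, (g j).eval (s j (p j))) := by
        intro p
        have h3 : ∀ b : ∀ j, Fin (n j), H b * (monoEv s a p
            * monoEv s (fun j => (b j : ℕ)) p * (∏ j, Dval (s j) (p j))⁻¹)
            = (H b * monoEv s (fun j => (b j : ℕ)) p)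
              * (monoEv s a p * (∏ j, Dval (s j) (p j))⁻¹) := fun b => by ring
        rw [Finset.sum_congr rfl fun b _ => h3 b, ← Finset.sum_mul, hH p]
        field_simp [hLp p, hGp p]
      rw [Finset.sum_congr rfl fun p _ => h2 p]
      exact hmono a ha
    have corner : ∀ b : ∀ j, Fin (n j), (∀ j, n j - k j ≤ (b j : ℕ)) → H b = 0 := by
      suffices hkey : ∀ t, ∀ b : ∀ j, Fin (n j), (∀ j, n j - k j ≤ (b j : ℕ)) →
          (∑ j, (n j - 1 - (b j : ℕ))) = t → H b = 0 by
        exact fun b hb => hkey _ b hb rfl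
      intro t
      induction t using Nat.strong_induction_on with
      | _ t ih =>
        intro b hb hbt
        have hak : ∀ j, n j - 1 - (b j : ℕ) < k j := by
          intro j
          have h1 : (b j : ℕ) < n j := (b j).isLt
          have h2 := hb j
          have h3 := hk j
          omega
        have h0 := hpair (fun j => n j - 1 - (b j : ℕ)) hak
        have hoff : ∀ b' ∈ (Finset.univ : Finset (∀ j, Fin (n j))), b' ≠ b →
            H b' * ∏ j, ∑ i, (s j i) ^ ((n j - 1 - (b j : ℕ)) + (b' j : ℕ))
              * (Dval (s j) i)⁻¹ = 0 := by
          intro b' _ hb'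
          by_cases hge : ∀ j, (b j : ℕ) ≤ (b' j : ℕ)
          · have hcorner' : ∀ j, n j - k j ≤ (b' j : ℕ) := fun j => le_trans (hb j) (hge j)
            have hlt : (∑ j, (n j - 1 - (b' j : ℕ))) < t := by
              rw [← hbt]
              obtain ⟨j0, hj0⟩ := Function.ne_iff.mp hb'
              refine Finset.sum_lt_sum (fun j _ => by have := hge j; omega)
                ⟨j0, Finset.mem_univ j0, ?_⟩
              have h1 : (b j0 : ℕ) < (b' j0 : ℕ) :=
                lt_of_le_of_ne (hge j0) (fun h => hj0 (Fin.ext h.symm))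
              have h2 : (b' j0 : ℕ) < n j0 := (b' j0).isLt
              omega
            rw [ih _ hlt b' hcorner' rfl, zero_mul]
          · push_neg at hge
            obtain ⟨j0, hj0⟩ := hge
            refine mul_eq_zero_of_right _ (Finset.prod_eq_zero (Finset.mem_univ j0) ?_)
            have hbj : (b j0 : ℕ) ≤ n j0 - 1 := by have := (b j0).isLt; omega
            have hn0 := hn j0
            rw [sigma_val (hs j0) (by omega), if_neg (by omega)]
        rw [Finset.sum_eq_single b hoff
          (fun hb' => absurd (Finset.mem_univ b) hb')] at h0
        have hprod : (∏ j, ∑ i, (s j i) ^ ((n j - 1 - (b j : ℕ)) + (b j : ℕ))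
            * (Dval (s j) i)⁻¹) = 1 := by
          refine Finset.prod_eq_one fun j _ => ?_
          have hbj : (b j : ℕ) < n j := (b j).isLt
          have he : (n j - 1 - (b j : ℕ)) + (b j : ℕ) = n j - 1 := by omega
          rw [he, sigma_val (hs j) (by omega), if_pos rfl]
        rw [hprod, mul_one] at h0
        exact h0
    set T : Finset (∀ j, Fin (n j)) :=
      Finset.univ.filter (fun b : ∀ j, Fin (n j) => ¬ ∀ j, n j - k j ≤ (b j : ℕ)) with hT
    refine ⟨∑ b ∈ T, MvPolynomial.monomial
      (Finsupp.equivFunOnFinite.symm (fun j => (b j : ℕ))) (H b), ?_, ?_⟩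
    · intro d hd
      obtain ⟨b, hbT, hdb⟩ := Finset.mem_biUnion.mp (MvPolynomial.support_sum hd)
      have hd1 : d = Finsupp.equivFunOnFinite.symm (fun j => (b j : ℕ)) := by
        by_cases hH0 : H b = 0
        · rw [hH0, MvPolynomial.support_monomial, if_pos rfl] at hdb
          exact absurd hdb (Finset.notMem_empty d)
        · rw [MvPolynomial.support_monomial, if_neg hH0, Finset.mem_singleton] at hdb
          exact hdb
      subst hd1
      have hbT' := (Finset.mem_filter.mp hbT).2
      constructor
      · intro j; simpa using (b j).isLt
      · intro hcon
        exact hbT' (fun j => by simpa using hcon j)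
    · intro p
      have hev : MvPolynomial.eval (fun j => s j (p j)) (∑ b ∈ T, MvPolynomial.monomial
          (Finsupp.equivFunOnFinite.symm (fun j => (b j : ℕ))) (H b))
          = ∑ b ∈ T, H b * monoEv s (fun j => (b j : ℕ)) p := by
        rw [map_sum]
        refine Finset.sum_congr rfl fun b _ => ?_
        rw [MvPolynomial.eval_monomial, Finsupp.prod_pow]
        simp [monoEv]
      have hfull : ∑ b ∈ T, H b * monoEv s (fun j => (b j : ℕ)) p
          = ∑ b : ∀ j, Fin (n j), H b * monoEv s (fun j => (b j : ℕ)) p := by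
        refine Finset.sum_subset (Finset.subset_univ T) fun b _ hbT => ?_
        have hc : ∀ j, n j - k j ≤ (b j : ℕ) := by
          by_contra hcon
          exact hbT (Finset.mem_filter.mpr ⟨Finset.mem_univ b, hcon⟩)
        rw [corner b hc, zero_mul]
      rw [hev, hfull, hH p, hLpeq p]
      rw [eq_comm, div_eq_iff (div_ne_zero (hLp p) (hGp p)), mul_div_assoc]
  · -- ACar ⊆ dual
    rintro ⟨f, hfsup, hfe⟩ c ⟨f', hfsup', hfe'⟩
    have hwc : ∀ p, w p * c p
        = ∑ d ∈ f.support, ∑ d' ∈ f'.support,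
            f.coeff d * f'.coeff d' *
              (monoEv s (fun j => d j) p * monoEv s (fun j => d' j) p
                * (∏ j, Dval (s j) (p j))⁻¹) := by
      intro p
      have h1 : w p * c p
          = (MvPolynomial.eval (fun j => s j (p j)) f)
            * (MvPolynomial.eval (fun j => s j (p j)) f')
            * (∏ j, Dval (s j) (p j))⁻¹ := by
        rw [hfe p, hfe' p, hLpeq p]
        field_simp [hLp p, hGp p]
      rw [h1, MvPolynomial.eval_eq' , MvPolynomial.eval_eq', Finset.sum_mul_sum,
        Finset.sum_mul]
      refine Finset.sum_congr rfl fun d _ => ?_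
      rw [Finset.sum_mul]
      refine Finset.sum_congr rfl fun d' _ => ?_
      simp only [monoEv]
      ring
    rw [Finset.sum_congr rfl fun p _ => hwc p, Finset.sum_comm]
    rw [Finset.sum_congr rfl fun d (_ : d ∈ f.support) => Finset.sum_comm]
    refine Finset.sum_eq_zero fun d hd => Finset.sum_eq_zero fun d' hd' => ?_
    rw [← Finset.mul_sum, pairing s (fun j => d j) (fun j => d' j)]
    obtain ⟨j0, hj0⟩ : ∃ j, ¬ (n j - k j ≤ d j) := by
      by_contra hcon
      push_neg at hcon
      exact (hfsup d hd).2 hcon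
    refine mul_eq_zero_of_right _ (Finset.prod_eq_zero (Finset.mem_univ j0) ?_)
    have h1 : d j0 < n j0 - k j0 := by omega
    have h2 : d' j0 < k j0 := hfsup' d' hd' j0
    have h3 := hk j0
    rw [sigma_val (hs j0) (by omega), if_neg (by omega)]
end

section
/- For m = 1: if g, g′ ∈ F[x] are nonvanishing on S ⊆ F with deg(g g′) ≤ |S| = n, then GRS(S, deg g, g) ∩ GRS(S, deg g′, g′) = GRS(S, deg(gcd(g,g′)), gcd(g,g′)). -/
/-- The generalized Reed–Solomon code `GRS(S,k,g) = {(f(sᵢ)/g(sᵢ))ᵢ : deg f < k}`. -/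
def GRSset (F : Type*) [Field F] (n k : ℕ) (s : Fin n → F) (g : Polynomial F) :
    Set (Fin n → F) :=
  {c | ∃ f : Polynomial F, f.degree < (k : WithBot ℕ) ∧
      ∀ i, c i = f.eval (s i) / g.eval (s i)}

/-- If `g, g′` are nonvanishing on `S` with `deg(g g′) ≤ n`, then
`GRS(S, deg g, g) ∩ GRS(S, deg g′, g′) = GRS(S, deg(gcd(g,g′)), gcd(g,g′))`. -/
theorem stmt_15 {F : Type*} [Field F] [Fintype F] [DecidableEq F] (n : ℕ)
    (s : Fin n → F) (hs : Function.Injective s)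
    (g g' : Polynomial F)
    (hg : ∀ i, g.eval (s i) ≠ 0) (hg' : ∀ i, g'.eval (s i) ≠ 0)
    (hdeg : (g * g').natDegree ≤ n) :
    GRSset F n g.natDegree s g ∩ GRSset F n g'.natDegree s g' =
      GRSset F n (EuclideanDomain.gcd g g').natDegree s (EuclideanDomain.gcd g g') := by
  rcases Nat.eq_zero_or_pos n with rfl | hn
  · ext c
    simp only [Set.mem_inter_iff, GRSset, Set.mem_setOf_eq]
    refine ⟨fun _ => ⟨0, ?_, fun i => i.elim0⟩,
      fun _ => ⟨⟨0, ?_, fun i => i.elim0⟩, ⟨0, ?_, fun i => i.elim0⟩⟩⟩ <;>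
      (rw [Polynomial.degree_zero]; exact WithBot.bot_lt_coe _)
  have hgne : g ≠ 0 := fun h => hg ⟨0, hn⟩ (by simp [h])
  have hg'ne : g' ≠ 0 := fun h => hg' ⟨0, hn⟩ (by simp [h])
  set d := EuclideanDomain.gcd g g' with hd
  have hdne : d ≠ 0 := fun h => hgne (EuclideanDomain.gcd_eq_zero_iff.mp h).1
  obtain ⟨a, ha⟩ : d ∣ g := EuclideanDomain.gcd_dvd_left g g'
  obtain ⟨b, hb⟩ : d ∣ g' := EuclideanDomain.gcd_dvd_right g g'
  have hane : a ≠ 0 := fun h => hgne (by rw [ha, h, mul_zero])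
  have hbne : b ≠ 0 := fun h => hg'ne (by rw [hb, h, mul_zero])
  have hcop : IsCoprime a b := by
    have hbez := EuclideanDomain.gcd_eq_gcd_ab g g'
    rw [← hd] at hbez
    refine ⟨EuclideanDomain.gcdA g g', EuclideanDomain.gcdB g g', ?_⟩
    have h2 : d * (EuclideanDomain.gcdA g g' * a + EuclideanDomain.gcdB g g' * b) = d * 1 := by
      linear_combination -hbez - EuclideanDomain.gcdA g g' * ha - EuclideanDomain.gcdB g g' * hb
    exact mul_left_cancel₀ hdne h2
  have hda : ∀ i, d.eval (s i) ≠ 0 ∧ a.eval (s i) ≠ 0 := fun i => by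
    have := hg i
    rw [ha, Polynomial.eval_mul] at this
    exact ⟨left_ne_zero_of_mul this, right_ne_zero_of_mul this⟩
  have hdb : ∀ i, d.eval (s i) ≠ 0 ∧ b.eval (s i) ≠ 0 := fun i => by
    have := hg' i
    rw [hb, Polynomial.eval_mul] at this
    exact ⟨left_ne_zero_of_mul this, right_ne_zero_of_mul this⟩
  have hng : g.natDegree = d.natDegree + a.natDegree := by
    rw [ha, Polynomial.natDegree_mul hdne hane]
  have hng' : g'.natDegree = d.natDegree + b.natDegree := by
    rw [hb, Polynomial.natDegree_mul hdne hbne]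
  have hsum : g.natDegree + g'.natDegree ≤ n := by
    rwa [Polynomial.natDegree_mul hgne hg'ne] at hdeg
  ext c
  simp only [Set.mem_inter_iff, GRSset, Set.mem_setOf_eq]
  constructor
  · rintro ⟨⟨f, hf, hcf⟩, ⟨f', hf', hcf'⟩⟩
    have hkey : f * g' = f' * g := by
      have hz : f * g' - f' * g = 0 := by
        rcases eq_or_ne (f * g' - f' * g) 0 with h0 | h0
        · exact h0
        apply Polynomial.eq_zero_of_natDegree_lt_card_of_eval_eq_zero _ hs
        · intro i
          have h1 : f.eval (s i) / g.eval (s i) = f'.eval (s i) / g'.eval (s i) :=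
            (hcf i).symm.trans (hcf' i)
          rw [div_eq_div_iff (hg i) (hg' i)] at h1
          simp only [Polynomial.eval_sub, Polynomial.eval_mul]
          linear_combination h1
        · rw [Fintype.card_fin]
          rw [Polynomial.natDegree_lt_iff_degree_lt h0]
          refine lt_of_le_of_lt (Polynomial.degree_sub_le _ _) (max_lt ?_ ?_)
          · rcases eq_or_ne f 0 with rfl | hfne
            · rw [zero_mul, Polynomial.degree_zero]; exact WithBot.bot_lt_coe n
            · rw [Polynomial.degree_mul, Polynomial.degree_eq_natDegree hfne,
                Polynomial.degree_eq_natDegree hg'ne, ← Nat.cast_add, Nat.cast_lt]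
              have : f.natDegree < g.natDegree := by
                rwa [Polynomial.degree_eq_natDegree hfne, Nat.cast_lt] at hf
              omega
          · rcases eq_or_ne f' 0 with rfl | hfne
            · rw [zero_mul, Polynomial.degree_zero]; exact WithBot.bot_lt_coe n
            · rw [Polynomial.degree_mul, Polynomial.degree_eq_natDegree hfne,
                Polynomial.degree_eq_natDegree hgne, ← Nat.cast_add, Nat.cast_lt]
              have : f'.natDegree < g'.natDegree := by
                rwa [Polynomial.degree_eq_natDegree hfne, Nat.cast_lt] at hf'
              omega
      exact sub_eq_zero.mp hz
    have hdvd : a ∣ f := by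
      apply hcop.dvd_of_dvd_mul_right
      refine ⟨f', ?_⟩
      have h3 : d * (f * b) = d * (f' * a) := by
        linear_combination hkey - f * hb + f' * ha
      have h4 := mul_left_cancel₀ hdne h3
      rw [h4]; ring
    obtain ⟨q, hq⟩ := hdvd
    refine ⟨q, ?_, ?_⟩
    · rcases eq_or_ne q 0 with rfl | hqne
      · rw [Polynomial.degree_zero]; exact WithBot.bot_lt_coe _
      · have hfne : f ≠ 0 := hq ▸ mul_ne_zero hane hqne
        have h1 : f.natDegree < g.natDegree := by
          rwa [Polynomial.degree_eq_natDegree hfne, Nat.cast_lt] at hf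
        have h2 : f.natDegree = a.natDegree + q.natDegree := by
          rw [hq, Polynomial.natDegree_mul hane hqne]
        rw [Polynomial.degree_eq_natDegree hqne, Nat.cast_lt]
        omega
    · intro i
      rw [hcf i, hq, ha, Polynomial.eval_mul, Polynomial.eval_mul]
      rw [div_eq_div_iff (by exact mul_ne_zero (hda i).1 (hda i).2) (hda i).1]
      ring
  · rintro ⟨q, hq, hcq⟩
    have hmul : ∀ (p : Polynomial F), p ≠ 0 → q.degree < (d.natDegree : WithBot ℕ) →
        (q * p).degree < ((d.natDegree + p.natDegree : ℕ) : WithBot ℕ) := by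
      intro p hpne hqd
      rcases eq_or_ne q 0 with rfl | hqne
      · rw [zero_mul, Polynomial.degree_zero]; exact WithBot.bot_lt_coe _
      · rw [Polynomial.degree_mul, Polynomial.degree_eq_natDegree hqne,
          Polynomial.degree_eq_natDegree hpne, ← Nat.cast_add, Nat.cast_lt]
        have : q.natDegree < d.natDegree := by
          rwa [Polynomial.degree_eq_natDegree hqne, Nat.cast_lt] at hqd
        omega
    refine ⟨⟨q * a, by rw [hng]; exact hmul a hane hq, fun i => ?_⟩,
      ⟨q * b, by rw [hng']; exact hmul b hbne hq, fun i => ?_⟩⟩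
    · rw [hcq i, ha, Polynomial.eval_mul, Polynomial.eval_mul]
      rw [div_eq_div_iff (hda i).1 (by exact mul_ne_zero (hda i).1 (hda i).2)]
      ring
    · rw [hcq i, hb, Polynomial.eval_mul, Polynomial.eval_mul]
      rw [div_eq_div_iff (hdb i).1 (by exact mul_ne_zero (hdb i).1 (hdb i).2)]
      ring
end
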